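/- Let (X,d) be a compact metric space equipped with a Borel measure μ with total mass V = μ(X) ∈ (0,∞). Let m ≥ 1 be a natural number and let κ > 0 and 0 < ρ ≤ 1 be constants such that μ(B(x,r)) ≥ κ·r^m·V for every x ∈ X and every 0 < r ≤ ρ (κ-non-collapsing on scales ≤ ρ). Let u : X → ℝ be a continuous function which is 1-Lipschitz with respect to d, let a ≤ 0 be a real number with sup_{x∈X} |u(x) - a| ≤ 2ρ, and set Y = (1/V)·∫_X (u - a)² e^{-u} dμ. Then sup_{x∈X} |u(x) - a| ≤ 2e · κ^{-1/(m+2)} · Y^{1/(m+2)}. -/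

import Mathlib

open MeasureTheory Metric Real

/-! On the ball of radius `r = |u x₀ - a| / 2` around `x₀` the 1-Lipschitz function `u` keeps
`|u - a| ≥ r`, while `u ≤ a + 2ρ ≤ 2` gives `e^{-u} ≥ e^{-2}`. Non-collapsing bounds the mass of
this ball below by `κ r^m V`, so `V Y ≥ e^{-2} κ r^{m+2} V`; taking `(m+2)`-th roots, and using
`e^{2/(m+2)} ≤ e`, bounds `r`. -/

theorem mul_le_integral_of_le_on {α : Type*} [MeasurableSpace α] {μ : Measure α}
    [IsFiniteMeasure μ] {f : α → ℝ} (hf₀ : 0 ≤ f) (hf : Integrable f μ) {s : Set α}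
    {c K : ℝ} (hc : 0 ≤ c) (hK : ENNReal.ofReal K ≤ μ s) (hfs : ∀ x ∈ s, c ≤ f x) :
    c * K ≤ ∫ x, f x ∂μ :=
  calc c * K ≤ c * (μ {x | c ≤ f x}).toReal := by
        refine mul_le_mul_of_nonneg_left ?_ hc
        rw [← ENNReal.ofReal_le_iff_le_toReal (measure_ne_top μ _)]
        exact hK.trans (measure_mono hfs)
    _ ≤ ∫ x, f x ∂μ := mul_meas_ge_le_integral_of_nonneg (.of_forall hf₀) hf c

theorem LipschitzWith.half_abs_sub_le_of_mem_ball {X : Type*} [PseudoMetricSpace X]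
    {u : X → ℝ} (hu : LipschitzWith 1 u) {x y : X} (a : ℝ)
    (hy : y ∈ ball x (|u x - a| / 2)) : |u x - a| / 2 ≤ |u y - a| := by
  have hdist : |u y - u x| ≤ dist y x := by simpa [Real.dist_eq] using hu.dist_le_mul y x
  have htri := abs_sub_le (u x) (u y) a
  rw [abs_sub_comm (u x) (u y)] at htri
  linarith [mem_ball.1 hy]

theorem LipschitzWith.half_abs_sub_sq_div_exp_two_le {X : Type*} [PseudoMetricSpace X]
    {u : X → ℝ} (hu : LipschitzWith 1 u) {x y : X} (a : ℝ)
    (hy : y ∈ ball x (|u x - a| / 2)) (huy : u y ≤ 2) :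
    (|u x - a| / 2) ^ 2 / exp 2 ≤ (u y - a) ^ 2 * exp (-u y) := by
  have hr_le := hu.half_abs_sub_le_of_mem_ball a hy
  calc (|u x - a| / 2) ^ 2 / exp 2 = (|u x - a| / 2) ^ 2 * exp (-2) := by
        rw [exp_neg, div_eq_mul_inv]
    _ ≤ |u y - a| ^ 2 * exp (-u y) := by gcongr
    _ = (u y - a) ^ 2 * exp (-u y) := by rw [sq_abs]

theorem le_exp_one_mul_rpow_of_mul_pow_le {κ r Y : ℝ} {n : ℕ} (hn : 2 ≤ n) (hκ : 0 < κ)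
    (hr : 0 ≤ r) (h : κ * r ^ n ≤ exp 2 * Y) :
    r ≤ exp 1 * κ ^ (-1 / (n : ℝ)) * Y ^ (1 / (n : ℝ)) := by
  have hn₀ : n ≠ 0 := by omega
  have hY : 0 ≤ Y := nonneg_of_mul_nonneg_right ((by positivity : 0 ≤ κ * r ^ n).trans h)
    (exp_pos 2)
  have hpow : (exp 1 * κ ^ (-1 / (n : ℝ)) * Y ^ (1 / (n : ℝ))) ^ n = exp n * Y / κ := by
    rw [neg_div, one_div, rpow_neg hκ.le, mul_pow, mul_pow, inv_pow,
      rpow_inv_natCast_pow hκ.le hn₀, rpow_inv_natCast_pow hY hn₀, ← exp_nat_mul, mul_one]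
    ring
  rw [← pow_le_pow_iff_left₀ hr (by positivity) hn₀, hpow, le_div_iff₀ hκ]
  calc r ^ n * κ ≤ exp 2 * Y := by linarith
    _ ≤ exp n * Y := by gcongr; exact_mod_cast hn

theorem stmt2_general {X : Type*} [MetricSpace X] [CompactSpace X] [MeasurableSpace X]
    [BorelSpace X] (μ : Measure X) [IsFiniteMeasure μ] (hμ : μ Set.univ ≠ 0)
    (m : ℕ) (κ ρ : ℝ) (hκ : 0 < κ) (hρ1 : ρ ≤ 1)
    (hnc : ∀ (x : X) (r : ℝ), 0 < r → r ≤ ρ →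
      ENNReal.ofReal (κ * r ^ m * (μ Set.univ).toReal) ≤ μ (ball x r))
    (u : X → ℝ) (hu : LipschitzWith 1 u)
    (a : ℝ) (ha : a ≤ 0) (hosc : ∀ x, |u x - a| ≤ 2 * ρ)
    (Y : ℝ)
    (hY : Y = ((μ Set.univ).toReal)⁻¹ *
      ∫ x, (u x - a) ^ 2 * Real.exp (-(u x)) ∂μ) :
    ∀ x, |u x - a| ≤
      2 * Real.exp 1 * κ ^ (-(1:ℝ) / ((m:ℝ) + 2)) * Y ^ ((1:ℝ) / ((m:ℝ) + 2)) := by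
  intro x₀
  set f : X → ℝ := fun x => (u x - a) ^ 2 * exp (-u x)
  set V := (μ Set.univ).toReal
  set r := |u x₀ - a| / 2 with hr
  have hV : 0 < V := ENNReal.toReal_pos hμ (measure_ne_top μ _)
  have hf₀ : 0 ≤ f := fun x => by positivity
  have hf : Integrable f μ := by
    have := hu.continuous
    exact (by fun_prop : Continuous f).integrable_of_hasCompactSupport (.of_compactSpace f)
  have hVY : V * Y = ∫ x, f x ∂μ := by rw [hY]; field_simp
  have hfr : ∀ y ∈ ball x₀ r, r ^ 2 / exp 2 ≤ f y := fun y hy =>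
    hu.half_abs_sub_sq_div_exp_two_le a hy (by linarith [le_abs_self (u y - a), hosc y])
  have hkey : κ * r ^ (m + 2) ≤ exp 2 * Y := by
    rcases (abs_nonneg (u x₀ - a)).eq_or_lt with h₀ | h₀
    · have hY₀ : 0 ≤ Y := nonneg_of_mul_nonneg_right (hVY ▸ integral_nonneg hf₀) hV
      rw [hr, ← h₀, zero_div, zero_pow (by omega), mul_zero]
      positivity
    · have hint := mul_le_integral_of_le_on hf₀ hf (by positivity)
        (hnc x₀ r (by positivity) (by linarith [hosc x₀])) hfr
      rw [← hVY, div_mul_eq_mul_div, div_le_iff₀ (exp_pos 2)] at hint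
      refine le_of_mul_le_mul_right ?_ hV
      linear_combination hint
  have hr_le := le_exp_one_mul_rpow_of_mul_pow_le (by omega) hκ (by positivity) hkey
  push_cast at hr_le
  linarith

/-- Lemma 2.3 on a compact metric measure space: κ-non-collapsing on scales ≤ ρ, a
1-Lipschitz potential u with |u - a| ≤ 2ρ and a ≤ 0, give the C⁰ bound
`|u - a| ≤ 2e · κ^{-1/(m+2)} · Y^{1/(m+2)}` where `Y = (1/V)∫ (u-a)² e^{-u} dμ`. -/
theorem stmt2 {X : Type*} [MetricSpace X] [CompactSpace X] [MeasurableSpace X]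
    [BorelSpace X] (μ : Measure X) [IsFiniteMeasure μ] (hμ : μ Set.univ ≠ 0)
    (m : ℕ) (hm : 1 ≤ m) (κ ρ : ℝ) (hκ : 0 < κ) (hρ0 : 0 < ρ) (hρ1 : ρ ≤ 1)
    (hnc : ∀ (x : X) (r : ℝ), 0 < r → r ≤ ρ →
      ENNReal.ofReal (κ * r ^ m * (μ Set.univ).toReal) ≤ μ (ball x r))
    (u : X → ℝ) (hu : LipschitzWith 1 u)
    (a : ℝ) (ha : a ≤ 0) (hosc : ∀ x, |u x - a| ≤ 2 * ρ)
    (Y : ℝ)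
    (hY : Y = ((μ Set.univ).toReal)⁻¹ *
      ∫ x, (u x - a) ^ 2 * Real.exp (-(u x)) ∂μ) :
    ∀ x, |u x - a| ≤
      2 * Real.exp 1 * κ ^ (-(1:ℝ) / ((m:ℝ) + 2)) * Y ^ ((1:ℝ) / ((m:ℝ) + 2)) :=
  stmt2_general μ hμ m κ ρ hκ hρ1 hnc u hu a ha hosc Y hY
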